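/- arXiv:2412.06399 — 3 statements merged into one kernel-verified Lean document; each statement's English description precedes it below -/
import Mathlib

section
/- Let α ∈ [0,1), let G be a finite simple graph with a nonempty set S of dominating vertices, let ℱ be the (disjoint) union of some of the connected components of G − S, and let c be a real number with Δ(ℱ) < c, where Δ(ℱ) is the maximum degree of ℱ. Let x be the positive Perron eigenvector of A_α(G) for λ_α(G), and set X_s = Σ_{v∈S} x_v, X_M = max_{v∈V(ℱ)} x_v, X_m = min_{v∈V(ℱ)} x_v. If λ_α(G) > α|S| + c, then X_m ≥ (1−α)X_s / (λ_α(G) − α|S|) and X_M < (1−α)X_s / (λ_α(G) − α|S| − c). -/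
open scoped Classical


/-- `H` is a minor of `G` (branch-set / minor-model definition). -/
def SimpleGraph.IsMinor {W V : Type*} (H : SimpleGraph W) (G : SimpleGraph V) : Prop :=
  ∃ f : W → Set V,
    (∀ w, (f w).Nonempty) ∧
    (∀ w, (G.induce (f w)).Connected) ∧
    (∀ w₁ w₂, w₁ ≠ w₂ → Disjoint (f w₁) (f w₂)) ∧
    (∀ w₁ w₂, H.Adj w₁ w₂ → ∃ v₁ ∈ f w₁, ∃ v₂ ∈ f w₂, G.Adj v₁ v₂)

/-- `G` has no `K_{a,b}`-minor. -/
def kabMinorFree (a b : ℕ) {V : Type*} (G : SimpleGraph V) : Prop :=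
  ¬ (completeBipartiteGraph (Fin a) (Fin b)).IsMinor G

/-- The `A_α`-matrix `α·D(G) + (1-α)·A(G)` of a graph. -/
noncomputable def aMatrix {V : Type*} [Fintype V] (G : SimpleGraph V) (α : ℝ) :
    Matrix V V ℝ :=
  Matrix.of fun u w =>
    (if u = w then α * ∑ z, (if G.Adj w z then (1 : ℝ) else 0) else 0)
    + (if G.Adj u w then (1 - α) else 0)

/-- The `A_α`-spectral radius: the largest eigenvalue of the `A_α`-matrix. -/
noncomputable def lambdaAlpha {V : Type*} [Fintype V] [DecidableEq V]
    (G : SimpleGraph V) (α : ℝ) : ℝ :=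
  sSup (spectrum ℝ (aMatrix G α))


/-- `τ = ⌊(b+1)/(a+1)⌋`, the number of stars of the star forest `F_{a,b}`. -/
def tauOf (a b : ℕ) : ℕ := (b + 1) / (a + 1)

/-- The star forest `F_{a,b}` on `b+1` vertices: the disjoint union of
`τ = ⌊(b+1)/(a+1)⌋` stars, `τ-1` of them isomorphic to `K_{1,a}` and one
isomorphic to `K_{1,c}` with `c = b - (a+1)(τ-1)`.  Vertex `i` belongs to the
block `min (i/(a+1)) (τ-1)`, first `τ-1` blocks of size `a+1`, whose first
vertex is the center of its star. -/
def starForest (a b : ℕ) : SimpleGraph (Fin (b + 1)) where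
  Adj i j := i ≠ j ∧
    min ((i : ℕ) / (a + 1)) (tauOf a b - 1) = min ((j : ℕ) / (a + 1)) (tauOf a b - 1) ∧
    ((i : ℕ) = min ((i : ℕ) / (a + 1)) (tauOf a b - 1) * (a + 1) ∨
     (j : ℕ) = min ((j : ℕ) / (a + 1)) (tauOf a b - 1) * (a + 1))
  symm := by
    constructor
    intro i j h
    exact ⟨h.1.symm, h.2.1.symm, h.2.2.symm⟩
  loopless := by constructor; intro i h; exact h.1 rfl

/-- `S^k(K_b)`: the complete graph `K_b` with one edge (between vertices `0`
and `1`) subdivided `k` times. -/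
def subdividedComplete (b k : ℕ) : SimpleGraph (Fin b ⊕ Fin k) where
  Adj x y :=
    match x, y with
    | Sum.inl i, Sum.inl j =>
        i ≠ j ∧ (k = 0 ∨ ¬(((i : ℕ) = 0 ∧ (j : ℕ) = 1) ∨ ((i : ℕ) = 1 ∧ (j : ℕ) = 0)))
    | Sum.inl i, Sum.inr p => ((i : ℕ) = 0 ∧ (p : ℕ) = 0) ∨ ((i : ℕ) = 1 ∧ (p : ℕ) = k - 1)
    | Sum.inr p, Sum.inl i => ((i : ℕ) = 0 ∧ (p : ℕ) = 0) ∨ ((i : ℕ) = 1 ∧ (p : ℕ) = k - 1)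
    | Sum.inr p, Sum.inr q => (p : ℕ) + 1 = (q : ℕ) ∨ (q : ℕ) + 1 = (p : ℕ)
  symm := by
    constructor
    rintro (i | p) (j | q) h
    · exact ⟨h.1.symm, by tauto⟩
    · exact h
    · exact h
    · tauto
  loopless := by
    constructor
    rintro (i | p) h
    · exact h.1 rfl
    · rcases h with h | h <;> omega

/-- The graph `F(a₁,a₂,a₃)`: a complete graph on `a₁+a₂+a₃ = b-1` vertices with
partition `V₁ ∪ V₂ ∪ V₃` (`|Vᵢ| = aᵢ`), together with a path `v₁v₂v₃` on three
new vertices, every vertex of `Vᵢ` joined to `vᵢ`. -/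
def fGraph (a₁ a₂ a₃ : ℕ) : SimpleGraph (Fin (a₁ + a₂ + a₃) ⊕ Fin 3) where
  Adj x y :=
    match x, y with
    | Sum.inl u, Sum.inl w => u ≠ w
    | Sum.inl u, Sum.inr i =>
        ((i : ℕ) = 0 ∧ (u : ℕ) < a₁) ∨
        ((i : ℕ) = 1 ∧ a₁ ≤ (u : ℕ) ∧ (u : ℕ) < a₁ + a₂) ∨
        ((i : ℕ) = 2 ∧ a₁ + a₂ ≤ (u : ℕ))
    | Sum.inr i, Sum.inl u =>
        ((i : ℕ) = 0 ∧ (u : ℕ) < a₁) ∨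
        ((i : ℕ) = 1 ∧ a₁ ≤ (u : ℕ) ∧ (u : ℕ) < a₁ + a₂) ∨
        ((i : ℕ) = 2 ∧ a₁ + a₂ ≤ (u : ℕ))
    | Sum.inr i, Sum.inr j => (i : ℕ) + 1 = (j : ℕ) ∨ (j : ℕ) + 1 = (i : ℕ)
  symm := by
    constructor
    rintro (u | i) (w | j) h
    · exact h.symm
    · exact h
    · exact h
    · tauto
  loopless := by
    constructor
    rintro (u | i) h
    · exact h rfl
    · rcases h with h | h <;> omega

/-- The Petersen graph: outer `5`-cycle, inner pentagram, five spokes. -/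
def petersen : SimpleGraph (Fin 5 ⊕ Fin 5) where
  Adj x y :=
    match x, y with
    | Sum.inl i, Sum.inl j => (j : ℕ) = ((i : ℕ) + 1) % 5 ∨ (i : ℕ) = ((j : ℕ) + 1) % 5
    | Sum.inl i, Sum.inr j => i = j
    | Sum.inr i, Sum.inl j => i = j
    | Sum.inr i, Sum.inr j => (j : ℕ) = ((i : ℕ) + 2) % 5 ∨ (i : ℕ) = ((j : ℕ) + 2) % 5
  symm := by
    constructor
    rintro (i | i) (j | j) h
    · tauto
    · exact h.symm
    · exact h.symm
    · tauto
  loopless := by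
    constructor
    rintro (i | i) h <;>
      · have hi : (i : ℕ) < 5 := i.isLt
        rcases h with h | h <;> omega

/-- The join `G ∨ H` of two graphs. -/
def joinG {V W : Type*} (G : SimpleGraph V) (H : SimpleGraph W) : SimpleGraph (V ⊕ W) where
  Adj x y :=
    match x, y with
    | Sum.inl u, Sum.inl w => G.Adj u w
    | Sum.inl _, Sum.inr _ => True
    | Sum.inr _, Sum.inl _ => True
    | Sum.inr u, Sum.inr w => H.Adj u w
  symm := by
    constructor
    rintro (u | u) (w | w) h
    · exact h.symm
    · trivial
    · trivial
    · exact h.symm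
  loopless := by
    constructor
    rintro (u | u) h
    · exact G.loopless.irrefl u h
    · exact H.loopless.irrefl u h

/-- The disjoint union of two graphs. -/
def disjUnion {V W : Type*} (G : SimpleGraph V) (H : SimpleGraph W) : SimpleGraph (V ⊕ W) where
  Adj x y :=
    match x, y with
    | Sum.inl u, Sum.inl w => G.Adj u w
    | Sum.inl _, Sum.inr _ => False
    | Sum.inr _, Sum.inl _ => False
    | Sum.inr u, Sum.inr w => H.Adj u w
  symm := by
    constructor
    rintro (u | u) (w | w) h
    · exact h.symm
    · exact h
    · exact h
    · exact h.symm
  loopless := by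
    constructor
    rintro (u | u) h
    · exact G.loopless.irrefl u h
    · exact H.loopless.irrefl u h

/-- `k` disjoint copies of the graph `H`. -/
def copies (k : ℕ) {W : Type*} (H : SimpleGraph W) : SimpleGraph (Fin k × W) where
  Adj x y := x.1 = y.1 ∧ H.Adj x.2 y.2
  symm := by constructor; rintro x y ⟨h1, h2⟩; exact ⟨h1.symm, h2.symm⟩
  loopless := by constructor; rintro x ⟨h1, h2⟩; exact H.loopless.irrefl _ h2

/-- `K_b^e`: the complete graph `K_b` with the edge between vertices `0` and
`1` removed and a pendant vertex attached to each of `0` and `1`. -/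
def kbE (b : ℕ) : SimpleGraph (Fin b ⊕ Fin 2) where
  Adj x y :=
    match x, y with
    | Sum.inl i, Sum.inl j =>
        i ≠ j ∧ ¬(((i : ℕ) = 0 ∧ (j : ℕ) = 1) ∨ ((i : ℕ) = 1 ∧ (j : ℕ) = 0))
    | Sum.inl i, Sum.inr p => (i : ℕ) = (p : ℕ)
    | Sum.inr p, Sum.inl i => (i : ℕ) = (p : ℕ)
    | Sum.inr _, Sum.inr _ => False
  symm := by
    constructor
    rintro (i | p) (j | q) h
    · exact ⟨h.1.symm, by tauto⟩
    · exact h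
    · exact h
    · exact h
  loopless := by
    constructor
    rintro (i | p) h
    · exact h.1 rfl
    · exact h

/-- The number of neighbours of `v` lying in the set `F`. -/
noncomputable def degIn {V : Type*} (G : SimpleGraph V) (F : Set V) (v : V) : ℕ :=
  (G.neighborSet v ∩ F).ncard

/-- `F` is a union of (vertex sets of) connected components of `G - S`. -/
def isComponentUnion {V : Type*} (G : SimpleGraph V) (S : Set V) (F : Set V) : Prop :=
  F ⊆ Sᶜ ∧ ∀ u v : ↥(Sᶜ : Set V), (G.induce Sᶜ).Reachable u v → (u : V) ∈ F → (v : V) ∈ F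

/-- A graph has the `(a,b)`-property if it is `K_{r,s}`-minor free for all
positive `r, s` with `r + s = b + 1` and `r ≤ ω = min {a, ⌊(b+1)/2⌋}`. -/
def abProperty (a b : ℕ) {V : Type*} (G : SimpleGraph V) : Prop :=
  ∀ r s : ℕ, 0 < r → 0 < s → r + s = b + 1 → r ≤ min a ((b + 1) / 2) →
    ¬ (completeBipartiteGraph (Fin r) (Fin s)).IsMinor G


/-! At a vertex `v ∈ F` every neighbour lies either in `S` (and all of `S` is adjacent to `v`) or in
`F` itself, so the eigenvalue equation reads
`(λ - α|S|) x_v = α d_F(v) x_v + (1 - α) X_S + (1 - α) ∑_{w ∈ N(v) ∩ F} x_w`.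
Dropping the nonnegative terms gives the lower bound at every vertex of `F`; at a vertex where `x`
is maximal on `F` the last sum is at most `d_F(v) x_v`, and `d_F(v) < c` gives the upper bound. -/

open Finset
open scoped Matrix

section

variable {V : Type*} {G : SimpleGraph V}

theorem isComponentUnion.mem_of_adj {S F : Set V} (hF : isComponentUnion G S F) {v w : V}
    (hv : v ∈ F) (hvw : G.Adj v w) (hw : w ∉ S) : w ∈ F :=
  hF.2 ⟨v, hF.1 hv⟩ ⟨w, hw⟩ (SimpleGraph.Adj.reachable (by simpa using hvw)) hv

variable [Fintype V]

theorem aMatrix_mulVec_apply (α : ℝ) (x : V → ℝ) (v : V) :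
    (aMatrix G α *ᵥ x) v =
      α * #{w | G.Adj v w} * x v + (1 - α) * ∑ w with G.Adj v w, x w := by
  simp only [Matrix.mulVec, dotProduct, aMatrix, Matrix.of_apply, add_mul, ite_mul, zero_mul,
    sum_add_distrib, sum_ite_eq, mem_univ, if_true, sum_boole, sum_filter, mul_sum, mul_ite,
    mul_zero]

theorem degIn_eq_card_filter (F : Set V) (v : V) :
    degIn G F v = #{w | G.Adj v w ∧ w ∈ F} := by
  rw [degIn, ← Set.ncard_coe_finset]
  congr 1
  ext w
  simp

variable {α μ : ℝ} {x : V → ℝ} {S : Finset V} {F : Set V}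

theorem filter_adj_eq_union_of_isComponentUnion
    (hdom : ∀ s ∈ S, ∀ u : V, u ≠ s → G.Adj s u) (hF : isComponentUnion G S F)
    {v : V} (hv : v ∈ F) :
    ({w | G.Adj v w} : Finset V) = S ∪ ({w | G.Adj v w ∧ w ∈ F} : Finset V) := by
  have hvS : v ∉ S := by simpa using hF.1 hv
  ext w
  simp only [mem_union, mem_filter, mem_univ, true_and]
  constructor
  · intro hvw
    by_cases hwS : w ∈ S
    · exact Or.inl hwS
    · exact Or.inr ⟨hvw, hF.mem_of_adj hv hvw (by simpa using hwS)⟩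
  · rintro (hwS | ⟨hvw, -⟩)
    · exact (hdom w hwS v fun h => hvS (h ▸ hwS)).symm
    · exact hvw

theorem disjoint_filter_mem_of_isComponentUnion (hF : isComponentUnion G S F) (v : V) :
    Disjoint S ({w | G.Adj v w ∧ w ∈ F} : Finset V) :=
  Finset.disjoint_left.2 fun w hwS hwF => by simpa [hwS] using hF.1 (mem_filter.1 hwF).2.2

theorem eigen_eq_of_isComponentUnion
    (hdom : ∀ s ∈ S, ∀ u : V, u ≠ s → G.Adj s u) (hF : isComponentUnion G S F)
    (heig : aMatrix G α *ᵥ x = μ • x) {v : V} (hv : v ∈ F) :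
    (μ - α * #S) * x v =
      α * degIn G F v * x v + (1 - α) * ∑ u ∈ S, x u
        + (1 - α) * ∑ w with G.Adj v w ∧ w ∈ F, x w := by
  have hv' := congrFun heig v
  have hdisj := disjoint_filter_mem_of_isComponentUnion hF v
  rw [aMatrix_mulVec_apply, filter_adj_eq_union_of_isComponentUnion hdom hF hv,
    card_union_of_disjoint hdisj, sum_union hdisj] at hv'
  rw [degIn_eq_card_filter]
  simp only [Pi.smul_apply, smul_eq_mul, Nat.cast_add] at hv'
  linarith

theorem one_sub_mul_sum_le_of_isComponentUnion (hα0 : 0 ≤ α) (hα1 : α ≤ 1)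
    (hdom : ∀ s ∈ S, ∀ u : V, u ≠ s → G.Adj s u) (hF : isComponentUnion G S F)
    (heig : aMatrix G α *ᵥ x = μ • x) (hx : ∀ v, 0 ≤ x v) {v : V} (hv : v ∈ F) :
    (1 - α) * ∑ u ∈ S, x u ≤ (μ - α * #S) * x v := by
  rw [eigen_eq_of_isComponentUnion hdom hF heig hv]
  have hdeg : 0 ≤ α * degIn G F v * x v := by have := hx v; positivity
  have hsum : 0 ≤ (1 - α) * ∑ w with G.Adj v w ∧ w ∈ F, x w :=
    mul_nonneg (by linarith) (sum_nonneg fun w _ => hx w)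
  linarith

theorem lt_one_sub_mul_sum_of_isComponentUnion (hα1 : α ≤ 1)
    (hdom : ∀ s ∈ S, ∀ u : V, u ≠ s → G.Adj s u) (hF : isComponentUnion G S F)
    (heig : aMatrix G α *ᵥ x = μ • x) {c : ℝ} {m : V} (hm : m ∈ F) (hxm : 0 < x m)
    (hmax : ∀ v ∈ F, x v ≤ x m) (hdeg : degIn G F m < c) :
    (μ - α * #S - c) * x m < (1 - α) * ∑ u ∈ S, x u := by
  have hsum : ∑ w with G.Adj m w ∧ w ∈ F, x w ≤ degIn G F m * x m := by
    rw [degIn_eq_card_filter, ← nsmul_eq_mul, ← sum_const]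
    exact sum_le_sum fun w hw => hmax w (mem_filter.1 hw).2.2
  have key := eigen_eq_of_isComponentUnion hdom hF heig hm
  nlinarith [mul_le_mul_of_nonneg_left hsum (sub_nonneg.2 hα1), mul_lt_mul_of_pos_right hdeg hxm]

end

theorem perron_entry_bounds_on_components_general
    {V : Type} [Fintype V] [DecidableEq V]
    (α : ℝ) (hα0 : 0 ≤ α) (hα1 : α < 1)
    (G : SimpleGraph V) (S : Finset V)
    (hdom : ∀ v ∈ S, ∀ u : V, u ≠ v → G.Adj v u)
    (F : Set V) (hF : isComponentUnion G (↑S) F) (hFne : F.Nonempty)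
    (c : ℝ) (hc : ∀ v ∈ F, (degIn G F v : ℝ) < c)
    (x : V → ℝ) (hx : ∀ v, 0 < x v)
    (heig : (aMatrix G α).mulVec x = lambdaAlpha G α • x)
    (hgap : α * S.card + c < lambdaAlpha G α) :
    (1 - α) * (∑ u ∈ S, x u) / (lambdaAlpha G α - α * S.card) ≤ sInf (x '' F) ∧
    sSup (x '' F) < (1 - α) * (∑ u ∈ S, x u) / (lambdaAlpha G α - α * S.card - c) := by
  obtain ⟨v₀, hv₀⟩ := hFne
  have hc0 : 0 < c := (Nat.cast_nonneg _).trans_lt (hc v₀ hv₀)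
  obtain ⟨m, hm, hmax⟩ := F.exists_max_image x F.toFinite ⟨v₀, hv₀⟩
  have hsSup : sSup (x '' F) = x m :=
    IsGreatest.csSup_eq ⟨Set.mem_image_of_mem x hm, by rintro _ ⟨v, hv, rfl⟩; exact hmax v hv⟩
  constructor
  · refine le_csInf ⟨x v₀, Set.mem_image_of_mem x hv₀⟩ ?_
    rintro _ ⟨v, hv, rfl⟩
    rw [div_le_iff₀ (by linarith), mul_comm (x v)]
    exact one_sub_mul_sum_le_of_isComponentUnion hα0 hα1.le hdom hF heig (fun v => (hx v).le) hv
  · rw [hsSup, lt_div_iff₀ (by linarith), mul_comm (x m)]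
    exact lt_one_sub_mul_sum_of_isComponentUnion hα1.le hdom hF heig hm (hx m) hmax (hc m hm)

/-- Bounds on the smallest and largest Perron entries on a union `F` of
components of `G - S`, where `S` is a set of dominating vertices of `G` and
the maximum degree of `F` is less than `c`. -/
theorem perron_entry_bounds_on_components
    {V : Type} [Fintype V] [DecidableEq V]
    (α : ℝ) (hα0 : 0 ≤ α) (hα1 : α < 1)
    (G : SimpleGraph V) (S : Finset V) (hSne : S.Nonempty)
    (hdom : ∀ v ∈ S, ∀ u : V, u ≠ v → G.Adj v u)
    (F : Set V) (hF : isComponentUnion G (↑S) F) (hFne : F.Nonempty)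
    (c : ℝ) (hc : ∀ v ∈ F, (degIn G F v : ℝ) < c)
    (x : V → ℝ) (hx : ∀ v, 0 < x v)
    (heig : (aMatrix G α).mulVec x = lambdaAlpha G α • x)
    (hgap : α * S.card + c < lambdaAlpha G α) :
    (1 - α) * (∑ u ∈ S, x u) / (lambdaAlpha G α - α * S.card) ≤ sInf (x '' F) ∧
    sSup (x '' F) < (1 - α) * (∑ u ∈ S, x u) / (lambdaAlpha G α - α * S.card - c) :=
  perron_entry_bounds_on_components_general α hα0 hα1 G S hdom F hF hFne c hc x hx heig hgap
end

section
/- Let α ∈ [0,1), let c > 0 and s ≥ 1 and real constants p > q > 0. There exists N (depending on α, c, s, p, q) such that the following holds for every graph G on n ≥ N vertices having a set S of exactly s dominating vertices: if ℱ is the union of some connected components of G − S with maximum degree Δ(ℱ) < c, x is the positive Perron eigenvector of A_α(G) for λ_α(G), X_M = max_{v∈V(ℱ)} x_v and X_m = min_{v∈V(ℱ)} x_v, then p·X_m > q·X_M and p·X_m² > q·X_M²; moreover, for any two vertices u, v ∈ V(ℱ) with d_ℱ(u) > d_ℱ(v) one has x_u > x_v, where d_ℱ denotes degree within ℱ. 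-/
open scoped Classical


/-! With `K = α(s + c) + (1 - α)c`, every `v ∈ F` is adjacent to all of `S` and to fewer than
`c` vertices of `F`, so the eigen-equation for `ρ = λ_α(G)` gives
`(ρ - K)·X_M ≤ (1 - α)·∑_{w ∈ S} x_w ≤ ρ·x_v`: the ratio `X_M / X_m` is at most `ρ / (ρ - K)`.
A dominating vertex forces `ρ ≥ (1 - α)√(n - 1)`, so this ratio tends to `1` as `n` grows; the
squared comparison is the linear one for `√p, √q`. For `d_F(u) > d_F(v)`, subtracting the
eigen-equations at `u` and `v` leaves `(1 - α)(∑_{N_F(u)} x - ∑_{N_F(v)} x)` plus a nonnegative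
term, and this sum difference is positive as soon as `c·X_M < (1 + c)·X_m`. -/

open Finset Filter

lemma sum_lt_sum_of_card_lt {ι : Type*} {A B : Finset ι} {f : ι → ℝ} {m M c : ℝ}
    (hA : ∀ w ∈ A, m ≤ f w) (hB : ∀ w ∈ B, f w ≤ M) (hcard : #B < #A) (hBc : (#B : ℝ) ≤ c)
    (hmM : m ≤ M) (hm : c * M < (1 + c) * m) : ∑ w ∈ B, f w < ∑ w ∈ A, f w := by
  have hm0 : 0 < m := by nlinarith [(#B).cast_nonneg (α := ℝ)]
  have hcard' : (#B : ℝ) + 1 ≤ #A := by exact_mod_cast hcard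
  calc ∑ w ∈ B, f w ≤ #B * M := by simpa using sum_le_card_nsmul B f M hB
    _ ≤ #B * m + c * (M - m) := by nlinarith
    _ < (#B + 1) * m := by linarith
    _ ≤ #A * m := by gcongr
    _ ≤ ∑ w ∈ A, f w := by simpa using card_nsmul_le_sum A f m hA

lemma mul_lt_mul_of_sub_mul_le {a b p q ρ K : ℝ} (hK : K < ρ) (hq : 0 ≤ q) (hb : 0 < b)
    (hab : (ρ - K) * a ≤ ρ * b) (hρ : q * ρ < p * (ρ - K)) : q * a < p * b := by
  refine lt_of_mul_lt_mul_left ?_ (sub_nonneg.2 hK.le)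
  calc (ρ - K) * (q * a) = q * ((ρ - K) * a) := by ring
    _ ≤ q * (ρ * b) := by gcongr
    _ = q * ρ * b := by ring
    _ < p * (ρ - K) * b := by gcongr
    _ = (ρ - K) * (p * b) := by ring

lemma eventually_mul_lt_mul_sub {p q : ℝ} (K : ℝ) (hpq : q < p) :
    ∀ᶠ ρ in atTop, q * ρ < p * (ρ - K) := by
  filter_upwards [eventually_gt_atTop (p * K / (p - q))] with ρ hρ
  rw [div_lt_iff₀ (sub_pos.2 hpq)] at hρ
  linarith

lemma tendsto_mul_sqrt_natCast_sub_one_atTop {a : ℝ} (ha : 0 < a) :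
    Tendsto (fun n : ℕ => a * √((n : ℝ) - 1)) atTop atTop :=
  (Real.tendsto_sqrt_atTop.comp
    (tendsto_atTop_add_const_right _ (-1) tendsto_natCast_atTop_atTop)).const_mul_atTop ha

namespace SimpleGraph

lemma disjoint_filter_of_isComponentUnion {V : Type*} {G : SimpleGraph V} {S : Finset V}
    {F : Set V} (hF : isComponentUnion G S F) (t : Finset V) : Disjoint S {w ∈ t | w ∈ F} :=
  Finset.disjoint_left.2 fun _ hwS hwF => hF.1 (mem_filter.1 hwF).2 hwS

variable {V : Type*} [Fintype V] {G : SimpleGraph V}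

lemma aMatrix_mulVec_apply (α : ℝ) (x : V → ℝ) (v : V) :
    (aMatrix G α).mulVec x v =
      α * G.degree v * x v + (1 - α) * ∑ w ∈ G.neighborFinset v, x w := by
  simp only [Matrix.mulVec, dotProduct, aMatrix, Matrix.of_apply, add_mul, ite_mul, zero_mul,
    sum_add_distrib, sum_ite_eq, mem_univ, if_true, sum_boole, ← sum_filter, mul_sum]
  rw [← card_neighborFinset_eq_degree, neighborFinset_eq_filter]

section Eigenvector

variable {α ρ : ℝ} {x : V → ℝ}

lemma mul_apply_eq_of_aMatrix_mulVec_eq (hρ : (aMatrix G α).mulVec x = ρ • x) (v : V) :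
    ρ * x v = α * G.degree v * x v + (1 - α) * ∑ w ∈ G.neighborFinset v, x w := by
  rw [← aMatrix_mulVec_apply, hρ, Pi.smul_apply, smul_eq_mul]

lemma one_sub_mul_sum_neighborFinset_le (hα0 : 0 ≤ α) (hx : ∀ v, 0 ≤ x v)
    (hρ : (aMatrix G α).mulVec x = ρ • x) (v : V) :
    (1 - α) * ∑ w ∈ G.neighborFinset v, x w ≤ ρ * x v := by
  have := mul_nonneg (mul_nonneg hα0 (G.degree v).cast_nonneg) (hx v)
  linarith [mul_apply_eq_of_aMatrix_mulVec_eq hρ v]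

lemma one_sub_mul_le_of_adj (hα0 : 0 ≤ α) (hα1 : α ≤ 1) (hx : ∀ v, 0 ≤ x v)
    (hρ : (aMatrix G α).mulVec x = ρ • x) {v w : V} (hvw : G.Adj v w) :
    (1 - α) * x w ≤ ρ * x v :=
  (mul_le_mul_of_nonneg_left (single_le_sum (fun u _ => hx u) ((mem_neighborFinset G v w).2 hvw))
    (sub_nonneg.2 hα1)).trans (one_sub_mul_sum_neighborFinset_le hα0 hx hρ v)

lemma neighborFinset_eq_erase_of_forall_adj {w : V} (hw : ∀ u, u ≠ w → G.Adj w u) :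
    G.neighborFinset w = univ.erase w := by
  ext u
  simp only [mem_neighborFinset, mem_erase, mem_univ, and_true]
  exact ⟨fun h => (G.ne_of_adj h).symm, hw u⟩

lemma one_sub_mul_sqrt_card_sub_one_le (hα0 : 0 ≤ α) (hα1 : α ≤ 1) (hx : ∀ v, 0 < x v)
    (hρ : (aMatrix G α).mulVec x = ρ • x) {w : V} (hw : ∀ u, u ≠ w → G.Adj w u) :
    (1 - α) * √((Fintype.card V : ℝ) - 1) ≤ ρ := by
  have hV : 0 < Fintype.card V := Fintype.card_pos_iff.2 ⟨w⟩
  set T := ∑ u ∈ univ.erase w, x u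
  have hx' : ∀ v, 0 ≤ x v := fun v => (hx v).le
  have hT : (1 - α) * T ≤ ρ * x w := by
    simpa only [T, neighborFinset_eq_erase_of_forall_adj hw]
      using one_sub_mul_sum_neighborFinset_le hα0 hx' hρ w
  have hn : (1 - α) * ((Fintype.card V : ℝ) - 1) * x w ≤ ρ * T := by
    have := sum_le_sum (s := univ.erase w) fun u hu =>
      one_sub_mul_le_of_adj hα0 hα1 hx' hρ (hw u (mem_erase.1 hu).1).symm
    rw [sum_const, card_erase_of_mem (mem_univ w), card_univ, nsmul_eq_mul,
      Nat.cast_sub hV, Nat.cast_one, ← mul_sum] at this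
    linear_combination this
  have hρ0 : 0 ≤ ρ := nonneg_of_mul_nonneg_left
    ((mul_nonneg (sub_nonneg.2 hα1) (sum_nonneg fun u _ => hx' u)).trans hT) (hx w)
  have hsq : (1 - α) ^ 2 * ((Fintype.card V : ℝ) - 1) ≤ ρ ^ 2 := by
    refine le_of_mul_le_mul_right ?_ (hx w)
    calc (1 - α) ^ 2 * ((Fintype.card V : ℝ) - 1) * x w
        = (1 - α) * ((1 - α) * ((Fintype.card V : ℝ) - 1) * x w) := by ring
      _ ≤ (1 - α) * (ρ * T) := by gcongr
      _ = ρ * ((1 - α) * T) := by ring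
      _ ≤ ρ * (ρ * x w) := by gcongr
      _ = ρ ^ 2 * x w := by ring
  have hcard : (1 : ℝ) ≤ Fintype.card V := by exact_mod_cast hV
  rwa [← pow_le_pow_iff_left₀ (mul_nonneg (sub_nonneg.2 hα1) (Real.sqrt_nonneg _)) hρ0
    two_ne_zero, mul_pow, Real.sq_sqrt (by linarith)]

end Eigenvector

lemma degIn_eq_card_filter (G : SimpleGraph V) (F : Set V) (v : V) :
    degIn G F v = #{w ∈ G.neighborFinset v | w ∈ F} := by
  rw [degIn, ← Set.ncard_coe_finset]
  congr 1
  ext w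
  simp

section ComponentUnion

variable {S : Finset V} {F : Set V}

lemma neighborFinset_eq_union_filter (hF : isComponentUnion G S F)
    (hS : ∀ v ∈ S, ∀ u, u ≠ v → G.Adj v u) {v : V} (hv : v ∈ F) :
    G.neighborFinset v = S ∪ {w ∈ G.neighborFinset v | w ∈ F} := by
  ext w
  simp only [mem_union, mem_filter, mem_neighborFinset]
  refine ⟨fun hvw => or_iff_not_imp_left.2 fun hw => ⟨hvw, ?_⟩, ?_⟩
  · exact hF.2 ⟨v, hF.1 hv⟩ ⟨w, hw⟩ (Adj.reachable (by simpa using hvw)) hv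
  · rintro (hw | ⟨hvw, -⟩)
    · exact (hS w hw v fun h => hF.1 hv (h ▸ hw)).symm
    · exact hvw

variable {α ρ c : ℝ} {x : V → ℝ}

lemma mul_apply_eq_of_mem_componentUnion (hρ : (aMatrix G α).mulVec x = ρ • x)
    (hF : isComponentUnion G S F) (hS : ∀ v ∈ S, ∀ u, u ≠ v → G.Adj v u) {v : V} (hv : v ∈ F) :
    ρ * x v = α * (#S + degIn G F v) * x v +
      (1 - α) * (∑ w ∈ S, x w + ∑ w ∈ G.neighborFinset v with w ∈ F, x w) := by
  have hN := neighborFinset_eq_union_filter hF hS hv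
  have hdisj := disjoint_filter_of_isComponentUnion hF (G.neighborFinset v)
  rw [mul_apply_eq_of_aMatrix_mulVec_eq hρ, ← card_neighborFinset_eq_degree, hN,
    card_union_of_disjoint hdisj, sum_union hdisj, degIn_eq_card_filter, ← hN]
  push_cast
  ring

lemma sub_mul_le_mul_of_mem_componentUnion (hα0 : 0 ≤ α) (hα1 : α ≤ 1) (hx : ∀ v, 0 ≤ x v)
    (hρ : (aMatrix G α).mulVec x = ρ • x) (hF : isComponentUnion G S F)
    (hS : ∀ v ∈ S, ∀ u, u ≠ v → G.Adj v u) (hdeg : ∀ v ∈ F, (degIn G F v : ℝ) ≤ c)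
    (hK : α * (#S + c) + (1 - α) * c ≤ ρ) {u v : V} (hu : u ∈ F) (hv : v ∈ F) :
    (ρ - (α * (#S + c) + (1 - α) * c)) * x u ≤ ρ * x v := by
  obtain ⟨a, ha, hmax⟩ := F.exists_max_image x F.toFinite ⟨u, hu⟩
  have hσ : (1 - α) * ∑ w ∈ S, x w ≤ ρ * x v := by
    have hsub : S ⊆ G.neighborFinset v :=
      (neighborFinset_eq_union_filter hF hS hv).symm ▸ subset_union_left
    exact (mul_le_mul_of_nonneg_left (sum_le_sum_of_subset_of_nonneg hsub fun w _ _ => hx w)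
      (sub_nonneg.2 hα1)).trans (one_sub_mul_sum_neighborFinset_le hα0 hx hρ v)
  have hNa : ∑ w ∈ G.neighborFinset a with w ∈ F, x w ≤ c * x a := by
    calc ∑ w ∈ G.neighborFinset a with w ∈ F, x w
        ≤ #{w ∈ G.neighborFinset a | w ∈ F} * x a := by
          simpa using sum_le_card_nsmul _ x (x a) fun w hw => hmax w (mem_filter.1 hw).2
      _ ≤ c * x a := by
          gcongr
          · exact hx a
          · exact degIn_eq_card_filter G F a ▸ hdeg a ha
  have hupper : (ρ - (α * (#S + c) + (1 - α) * c)) * x a ≤ (1 - α) * ∑ w ∈ S, x w := by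
    have hda : α * (#S + degIn G F a) * x a ≤ α * (#S + c) * x a := by
      gcongr
      · exact hx a
      · exact hdeg a ha
    have := mul_le_mul_of_nonneg_left hNa (sub_nonneg.2 hα1)
    linarith [mul_apply_eq_of_mem_componentUnion hρ hF hS ha]
  calc (ρ - (α * (#S + c) + (1 - α) * c)) * x u
      ≤ (ρ - (α * (#S + c) + (1 - α) * c)) * x a :=
        mul_le_mul_of_nonneg_left (hmax u hu) (sub_nonneg.2 hK)
    _ ≤ (1 - α) * ∑ w ∈ S, x w := hupper
    _ ≤ ρ * x v := hσ

lemma lt_of_degIn_lt (hα0 : 0 ≤ α) (hα1 : α < 1) (hx : ∀ v, 0 ≤ x v)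
    (hρ : (aMatrix G α).mulVec x = ρ • x) (hF : isComponentUnion G S F)
    (hS : ∀ v ∈ S, ∀ u, u ≠ v → G.Adj v u) (hdeg : ∀ v ∈ F, (degIn G F v : ℝ) ≤ c)
    (hcmp : ∀ u ∈ F, ∀ v ∈ F, c * x v < (1 + c) * x u) (hρc : α * (#S + c) < ρ)
    {u v : V} (hu : u ∈ F) (hv : v ∈ F) (hd : degIn G F v < degIn G F u) : x v < x u := by
  obtain ⟨a, ha, hmax⟩ := F.exists_max_image x F.toFinite ⟨u, hu⟩
  obtain ⟨b, hb, hmin⟩ := F.exists_min_image x F.toFinite ⟨u, hu⟩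
  have hgap : ∑ w ∈ G.neighborFinset v with w ∈ F, x w <
      ∑ w ∈ G.neighborFinset u with w ∈ F, x w :=
    sum_lt_sum_of_card_lt (fun w hw => hmin w (mem_filter.1 hw).2)
      (fun w hw => hmax w (mem_filter.1 hw).2) (by simpa only [degIn_eq_card_filter] using hd)
      (degIn_eq_card_filter G F v ▸ hdeg v hv) (hmin a ha) (hcmp b hb a ha)
  have hdu : α * (#S + degIn G F u) < ρ := by
    have : α * (#S + degIn G F u) ≤ α * (#S + c) := by gcongr; exact hdeg u hu
    linarith
  have hd' : (degIn G F v : ℝ) < degIn G F u := by exact_mod_cast hd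
  have hid : (ρ - α * (#S + degIn G F u)) * (x u - x v) =
      α * ((degIn G F u : ℝ) - degIn G F v) * x v + (1 - α) *
        (∑ w ∈ G.neighborFinset u with w ∈ F, x w - ∑ w ∈ G.neighborFinset v with w ∈ F, x w) := by
    linear_combination mul_apply_eq_of_mem_componentUnion hρ hF hS hu -
      mul_apply_eq_of_mem_componentUnion hρ hF hS hv
  by_contra! h
  have hlhs := mul_nonpos_of_nonneg_of_nonpos (sub_pos.2 hdu).le (sub_nonpos.2 h)
  have hdeg_term := mul_nonneg (mul_nonneg hα0 (sub_pos.2 hd').le) (hx v)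
  have hgap_term := mul_pos (sub_pos.2 hα1) (sub_pos.2 hgap)
  linarith

end ComponentUnion

end SimpleGraph

open SimpleGraph

/-- For `n` large, the Perron entries on a union of bounded-degree components
of `G - S` (`S` a set of `s` dominating vertices) are comparable: `p·X_m > q·X_M`,
`p·X_m² > q·X_M²`, and entries increase with degree inside `F`. -/
theorem perron_entries_comparable_on_components
    (α : ℝ) (hα0 : 0 ≤ α) (hα1 : α < 1)
    (c : ℝ) (hc : 0 < c) (s : ℕ) (hs : 1 ≤ s)
    (p q : ℝ) (hq : 0 < q) (hpq : q < p) :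
    ∃ N : ℕ, ∀ (V : Type) [Fintype V] [DecidableEq V], N ≤ Fintype.card V →
      ∀ (G : SimpleGraph V) (S : Finset V), S.card = s →
        (∀ v ∈ S, ∀ u : V, u ≠ v → G.Adj v u) →
        ∀ F : Set V, isComponentUnion G (↑S) F →
          (∀ v ∈ F, (degIn G F v : ℝ) < c) →
          ∀ x : V → ℝ, (∀ v, 0 < x v) →
            (aMatrix G α).mulVec x = lambdaAlpha G α • x →
            (∀ u ∈ F, ∀ v ∈ F, q * x v < p * x u) ∧
            (∀ u ∈ F, ∀ v ∈ F, q * x v ^ 2 < p * x u ^ 2) ∧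
            (∀ u ∈ F, ∀ v ∈ F, degIn G F v < degIn G F u → x v < x u) := by
  set K := α * (s + c) + (1 - α) * c
  obtain ⟨Λ, hΛ⟩ := eventually_atTop.1 <| (eventually_gt_atTop K).and <|
    (eventually_mul_lt_mul_sub K hpq).and <|
    (eventually_mul_lt_mul_sub K (Real.sqrt_lt_sqrt hq.le hpq)).and
    (eventually_mul_lt_mul_sub K (lt_one_add c))
  obtain ⟨N, hN⟩ := eventually_atTop.1 <|
    (tendsto_mul_sqrt_natCast_sub_one_atTop (sub_pos.2 hα1)).eventually_ge_atTop Λ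
  refine ⟨N, fun V _ _ hn G S hS hdom F hF hdeg x hx hρ => ?_⟩
  obtain ⟨w, hw⟩ : S.Nonempty := card_pos.1 (by omega)
  set ρ := lambdaAlpha G α
  obtain ⟨hK, hpqρ, hsqrtρ, hcρ⟩ := hΛ ρ ((hN _ hn).trans
    (one_sub_mul_sqrt_card_sub_one_le hα0 hα1.le hx hρ (hdom w hw)))
  subst hS
  have hx' : ∀ v, 0 ≤ x v := fun v => (hx v).le
  have hdeg' : ∀ v ∈ F, (degIn G F v : ℝ) ≤ c := fun v hv => (hdeg v hv).le
  have hlt {p' q' : ℝ} (hq' : 0 ≤ q') (h : q' * ρ < p' * (ρ - K)) :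
      ∀ u ∈ F, ∀ v ∈ F, q' * x v < p' * x u := fun u hu v hv =>
    mul_lt_mul_of_sub_mul_le hK hq' (hx u)
      (sub_mul_le_mul_of_mem_componentUnion hα0 hα1.le hx' hρ hF hdom hdeg' hK.le hv hu) h
  refine ⟨hlt hq.le hpqρ, fun u hu v hv => ?_, fun u hu v hv =>
    lt_of_degIn_lt hα0 hα1 hx' hρ hF hdom hdeg' (hlt hc.le hcρ)
      (by linarith [mul_nonneg (sub_nonneg.2 hα1.le) hc.le]) hu hv⟩
  have := pow_lt_pow_left₀ (hlt (Real.sqrt_nonneg q) hsqrtρ u hu v hv)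
    (mul_nonneg (Real.sqrt_nonneg q) (hx' v)) two_ne_zero
  rwa [mul_pow, mul_pow, Real.sq_sqrt hq.le, Real.sq_sqrt (hq.trans hpq).le] at this
end

section
/- Let b ≥ 3 and α ∈ [0,1). Then λ_α(K_b^e) > b − 1 − 2(1−α)/(b−1), where K_b^e is the graph obtained from the complete graph K_b by deleting one edge uv and attaching one new pendant vertex to u and one new pendant vertex to v. -/
open scoped Classical


/-!
Apply the Rayleigh bound `xᵀ A_α x ≤ λ_α xᵀ x` to the indicator vector `x` of the `K_b` part of
`K_b^e`. Every row of `A_α` sums to the degree of its vertex, and each vertex of the `K_b` part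
has degree `b - 1`; so the `K_b × K_b` block of `A_α` sums to `b (b - 1)` minus the `2 (1 - α)`
carried by the two pendant edges. Hence `λ_α ≥ b - 1 - 2 (1 - α) / b`, which beats the claimed
bound because `0 < b - 1 < b` and `α < 1`.
-/

open Matrix

lemma dotProduct_mulVec_le_sSup_spectrum_mul {n : Type*} [Fintype n] [DecidableEq n]
    {M : Matrix n n ℝ} (hM : M.IsHermitian) (x : n → ℝ) :
    x ⬝ᵥ M *ᵥ x ≤ sSup (spectrum ℝ M) * (x ⬝ᵥ x) := by
  set L := sSup (spectrum ℝ M)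
  have hpsd : (algebraMap ℝ _ L - M).PosSemidef := by
    refine posSemidef_iff_isHermitian_and_spectrum_nonneg.2 ⟨?_, ?_⟩
    · simpa [Matrix.algebraMap_eq_diagonal] using (isHermitian_diagonal _).sub hM
    · rw [← spectrum.singleton_sub_eq]
      rintro _ ⟨_, rfl, μ, hμ, rfl⟩
      exact sub_nonneg.2 (le_csSup finite_real_spectrum.bddAbove hμ)
  simpa [Algebra.algebraMap_eq_smul_one, sub_mulVec, smul_mulVec] using
    hpsd.dotProduct_mulVec_nonneg x

lemma aMatrix_isHermitian {V : Type*} [Fintype V] (G : SimpleGraph V) (α : ℝ) :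
    (aMatrix G α).IsHermitian := by
  refine Matrix.IsHermitian.ext fun u w => ?_
  by_cases h : u = w
  · subst h; simp
  · simp [aMatrix, h, Ne.symm h, G.adj_comm]

lemma sum_aMatrix_row {V : Type*} [Fintype V] (G : SimpleGraph V) (α : ℝ) (v : V) :
    ∑ w, aMatrix G α v w = ∑ w, if G.Adj v w then 1 else 0 := by
  simp only [aMatrix, Matrix.of_apply, Finset.sum_add_distrib, Finset.sum_ite_eq,
    Finset.mem_univ, if_true]
  simp only [← mul_boole _ (1 - α), ← Finset.mul_sum]
  ring

lemma Fin.sum_ite_val_eq {M : Type*} [AddCommMonoid M] {b p : ℕ} (hp : p < b) (c : M) :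
    ∑ i : Fin b, (if (i : ℕ) = p then c else 0) = c := by
  rw [Fin.sum_univ_eq_sum_range (fun i => if i = p then c else 0), Finset.sum_ite_eq']
  simp [hp]

lemma kbE_sum_adj_inl {b : ℕ} (hb : 2 ≤ b) (i : Fin b) :
    ∑ z, (if (kbE b).Adj (Sum.inl i) z then (1 : ℝ) else 0) = b - 1 := by
  have hclique : ∀ j : Fin b,
      (if (kbE b).Adj (Sum.inl i) (Sum.inl j) then (1 : ℝ) else 0) =
        1 - (if (j : ℕ) = i then 1 else 0)
          - (if (i : ℕ) = 0 then 1 else 0) * (if (j : ℕ) = 1 then 1 else 0)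
          - (if (i : ℕ) = 1 then 1 else 0) * (if (j : ℕ) = 0 then 1 else 0) := by
    intro j
    simp only [kbE, ne_eq, Fin.ext_iff]
    split_ifs <;> grind
  have hpendant : ∑ p : Fin 2, (if (kbE b).Adj (Sum.inl i) (Sum.inr p) then (1 : ℝ) else 0) =
      (if (i : ℕ) = 0 then 1 else 0) + (if (i : ℕ) = 1 then 1 else 0) := by
    simp only [kbE, Fin.sum_univ_two, Fin.val_zero, Fin.val_one]
    -- the two sides differ only in their (classical vs. `Nat.decEq`) `Decidable` instances
    congr
  rw [Fintype.sum_sum_type, Finset.sum_congr rfl fun j _ => hclique j, hpendant]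
  simp only [Finset.sum_sub_distrib, ← Finset.mul_sum, Fin.sum_ite_val_eq i.isLt,
    Fin.sum_ite_val_eq (by omega : 1 < b), Fin.sum_ite_val_eq (by omega : 0 < b),
    Finset.sum_const, Finset.card_univ, Fintype.card_fin, nsmul_eq_mul, mul_one]
  ring

lemma aMatrix_kbE_inl_inr (b : ℕ) (α : ℝ) (i : Fin b) (p : Fin 2) :
    aMatrix (kbE b) α (Sum.inl i) (Sum.inr p) = if (i : ℕ) = p then 1 - α else 0 := by
  simp [aMatrix, kbE]

lemma kbE_dotProduct_mulVec_clique_indicator {b : ℕ} (hb : 2 ≤ b) (α : ℝ) :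
    Sum.elim 1 0 ⬝ᵥ aMatrix (kbE b) α *ᵥ Sum.elim 1 0 = b * (b - 1) - 2 * (1 - α) := by
  have hrow : ∀ i : Fin b, ∑ j, aMatrix (kbE b) α (Sum.inl i) (Sum.inl j) =
      (b - 1) - ∑ p, aMatrix (kbE b) α (Sum.inl i) (Sum.inr p) := by
    intro i
    rw [← kbE_sum_adj_inl hb i, ← sum_aMatrix_row, Fintype.sum_sum_type]
    ring
  have hpendant : ∑ i : Fin b, ∑ p, aMatrix (kbE b) α (Sum.inl i) (Sum.inr p) = 2 * (1 - α) := by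
    rw [Finset.sum_comm]
    calc _ = ∑ _p : Fin 2, (1 - α) := Finset.sum_congr rfl fun p _ => by
            simp only [aMatrix_kbE_inl_inr, Fin.sum_ite_val_eq (p.isLt.trans_le hb)]
      _ = 2 * (1 - α) := by
            rw [Finset.sum_const, Finset.card_univ, Fintype.card_fin, nsmul_eq_mul, Nat.cast_ofNat]
  simp only [dotProduct, mulVec, Fintype.sum_sum_type, Sum.elim_inl, Sum.elim_inr, Pi.one_apply,
    Pi.zero_apply, one_mul, mul_one, mul_zero, zero_mul, Finset.sum_const_zero, add_zero]
  rw [Finset.sum_congr rfl fun i _ => hrow i, Finset.sum_sub_distrib, hpendant, Finset.sum_const,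
    Finset.card_univ, Fintype.card_fin, nsmul_eq_mul]

theorem lambdaAlpha_kbE_lower_bound_general
    (b : ℕ) (hb : 3 ≤ b) (α : ℝ) (hα1 : α < 1) :
    (b : ℝ) - 1 - 2 * (1 - α) / ((b : ℝ) - 1) < lambdaAlpha (kbE b) α := by
  have hb3 : (3 : ℝ) ≤ b := by exact_mod_cast hb
  have hrayleigh := dotProduct_mulVec_le_sSup_spectrum_mul (aMatrix_isHermitian (kbE b) α)
    (Sum.elim 1 0)
  have hnorm : (Sum.elim 1 0 : Fin b ⊕ Fin 2 → ℝ) ⬝ᵥ Sum.elim 1 0 = b := by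
    simp [dotProduct, Fintype.sum_sum_type]
  rw [kbE_dotProduct_mulVec_clique_indicator (by omega), hnorm] at hrayleigh
  calc (b : ℝ) - 1 - 2 * (1 - α) / (b - 1) < b - 1 - 2 * (1 - α) / b := by
        gcongr (b : ℝ) - 1 - ?_
        exact div_lt_div_of_pos_left (by linarith) (by linarith) (by linarith)
    _ ≤ lambdaAlpha (kbE b) α := by
        rw [sub_le_comm, le_div_iff₀ (by linarith)]
        unfold lambdaAlpha
        linarith

/-- Lower bound for the `A_α`-spectral radius of `K_b^e`, the complete graph
`K_b` with one edge removed and two pendant vertices attached to its ends. -/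
theorem lambdaAlpha_kbE_lower_bound
    (b : ℕ) (hb : 3 ≤ b) (α : ℝ) (hα0 : 0 ≤ α) (hα1 : α < 1) :
    (b : ℝ) - 1 - 2 * (1 - α) / ((b : ℝ) - 1) < lambdaAlpha (kbE b) α :=
  lambdaAlpha_kbE_lower_bound_general b hb α hα1
end
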